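/- For every integer d ≥ 4, the number of quadruples (α,β,c,e) ∈ ℕ⁴ with α+β+c+e = d and d dividing β+2c+3e is strictly less than (d+1)(d+2)/2; equivalently, the cardinality μ(T_d) of W_d satisfies μ(T_d) < binom(d+2, 2). -/

import Mathlib

/-!
Write `w = β + 2c + 3e` for the weight of a quadruple `(α, β, c, e)` with `α + β + c + e = d`.
Since `w ≤ 3d`, divisibility by `d` means `w ∈ {0, d, 2d, 3d}`. Weights `0` and `3d` occur
only for `(d,0,0,0)` and `(0,0,0,d)`; a quadruple of weight `d` is determined by `(c, e)` and one of
weight `2d` by `(c + e, β)`. This gives an injection into the triangle `{(a, b) : a + b ≤ d}`,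
which has `binom(d+2, 2)` points, and `(0, d - 1)` is never hit. Finally `W_d` injects into the
quadruples by reading off the exponents of the monomial that `(r, γ, δ)` encodes.
-/

/-- `W_d`: triples `(r,γ,δ)` encoding the degree-`d` monomials invariant under the
action of the diagonal matrix `M(1,e,e²,e³)`. -/
def Wset (d : ℕ) : Set (ℤ × ℤ × ℤ) :=
  {x | 0 ≤ x.1 ∧ x.1 ≤ 3 ∧ 0 ≤ x.2.1 ∧ 0 ≤ x.2.2 ∧
    0 ≤ x.2.2 + 2 * x.2.1 + (1 - x.1) * (d : ℤ) ∧ 2 * x.2.2 + 3 * x.2.1 ≤ x.1 * (d : ℤ)}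

open Finset

def invariantExponents (d : ℕ) : Set (ℕ × ℕ × ℕ × ℕ) :=
  {q | q.1 + q.2.1 + q.2.2.1 + q.2.2.2 = d ∧ d ∣ q.2.1 + 2 * q.2.2.1 + 3 * q.2.2.2}

theorem mem_invariantExponents {d α β c e : ℕ} :
    (α, β, c, e) ∈ invariantExponents d ↔ α + β + c + e = d ∧ d ∣ β + 2 * c + 3 * e :=
  Iff.rfl

theorem mem_Wset {d : ℕ} {r γ δ : ℤ} :
    (r, γ, δ) ∈ Wset d ↔ 0 ≤ r ∧ r ≤ 3 ∧ 0 ≤ γ ∧ 0 ≤ δ ∧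
      0 ≤ δ + 2 * γ + (1 - r) * d ∧ 2 * δ + 3 * γ ≤ r * d :=
  Iff.rfl

def triangle (d : ℕ) : Finset (ℕ × ℕ) :=
  (range (d + 1) ×ˢ range (d + 1)).filter fun p => p.1 + p.2 ≤ d

theorem card_triangle (d : ℕ) : #(triangle d) = (d + 2).choose 2 := by
  have htriangle : triangle d = (range (d + 1)).biUnion antidiagonal := by
    ext ⟨a, b⟩
    simp only [triangle, mem_filter, mem_product, mem_range, mem_biUnion,
      HasAntidiagonal.mem_antidiagonal]
    exact ⟨fun _ => ⟨a + b, by omega, rfl⟩, fun ⟨n, hn, h⟩ => by omega⟩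
  have hdisj : (range (d + 1) : Set ℕ).PairwiseDisjoint antidiagonal := fun m _ n _ hmn =>
    disjoint_left.2 fun p hm hn => hmn ((mem_antidiagonal.1 hm).symm.trans (mem_antidiagonal.1 hn))
  rw [htriangle, card_biUnion hdisj, Nat.choose_two_right, ← sum_range_id]
  simp only [Nat.card_antidiagonal, sum_range_succ' (fun i => i) (d + 1), add_zero]

theorem exists_weight_eq_mul_of_dvd {d α β c e : ℕ} (hsum : α + β + c + e = d)
    (hdvd : d ∣ β + 2 * c + 3 * e) : ∃ k ≤ 3, β + 2 * c + 3 * e = k * d :=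
  ⟨_, Nat.div_le_of_le_mul (by omega), (Nat.div_mul_cancel hdvd).symm⟩

/-- Quadruples of weight `d` land in `{2a + 3b ≤ d}`, those of weight `2d` in `{2a + 3b > d}`. -/
def triangleEncoding (d : ℕ) : ℕ × ℕ × ℕ × ℕ → ℕ × ℕ
  | (_, β, c, e) =>
    if β + 2 * c + 3 * e = 0 then (0, d)
    else if β + 2 * c + 3 * e = d then (c, e)
    else if β + 2 * c + 3 * e = 2 * d then (c + e, β)
    else (1, d - 1)

theorem mapsTo_triangleEncoding {d : ℕ} (hd : 3 ≤ d) :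
    Set.MapsTo (triangleEncoding d) (invariantExponents d) ((triangle d).erase (0, d - 1)) := by
  rintro ⟨α, β, c, e⟩ hq
  obtain ⟨hsum, hdvd⟩ := mem_invariantExponents.1 hq
  obtain ⟨k, hk3, hk⟩ := exists_weight_eq_mul_of_dvd hsum hdvd
  simp only [triangleEncoding, triangle, coe_erase, Set.mem_sdiff, mem_coe, mem_filter,
    mem_product, mem_range, Set.mem_singleton_iff]
  interval_cases k <;> split_ifs <;> simp only [Prod.mk.injEq] <;> omega

theorem injOn_triangleEncoding {d : ℕ} (hd : 3 ≤ d) :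
    Set.InjOn (triangleEncoding d) (invariantExponents d) := by
  rintro ⟨α, β, c, e⟩ hq ⟨α', β', c', e'⟩ hq' h
  obtain ⟨hsum, hdvd⟩ := mem_invariantExponents.1 hq
  obtain ⟨hsum', hdvd'⟩ := mem_invariantExponents.1 hq'
  obtain ⟨k, hk3, hk⟩ := exists_weight_eq_mul_of_dvd hsum hdvd
  obtain ⟨k', hk3', hk'⟩ := exists_weight_eq_mul_of_dvd hsum' hdvd'
  simp only [triangleEncoding] at h
  simp only [Prod.mk.injEq]
  interval_cases k <;> interval_cases k' <;> split_ifs at h <;>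
    simp only [Prod.mk.injEq] at h <;> omega

theorem ncard_invariantExponents_lt {d : ℕ} (hd : 3 ≤ d) :
    (invariantExponents d).ncard < (d + 2).choose 2 :=
  calc (invariantExponents d).ncard ≤ #((triangle d).erase (0, d - 1)) := by
        rw [← Set.ncard_coe_finset]
        exact Set.ncard_le_ncard_of_injOn _ (mapsTo_triangleEncoding hd)
          (injOn_triangleEncoding hd)
    _ < #(triangle d) := card_erase_lt_of_mem (by simp [triangle])
    _ = (d + 2).choose 2 := card_triangle d

def exponentsOfWset (d : ℕ) : ℤ × ℤ × ℤ → ℕ × ℕ × ℕ × ℕ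
  | (r, γ, δ) =>
    ((δ + 2 * γ + (1 - r) * d).toNat, (r * d - 2 * δ - 3 * γ).toNat, δ.toNat, γ.toNat)

theorem mapsTo_exponentsOfWset (d : ℕ) :
    Set.MapsTo (exponentsOfWset d) (Wset d) (invariantExponents d) := by
  rintro ⟨r, γ, δ⟩ hx
  obtain ⟨-, -, hγ, hδ, hα, hβ⟩ := mem_Wset.1 hx
  simp only [exponentsOfWset, mem_invariantExponents]
  have hα' := Int.toNat_of_nonneg hα
  have hβ' : ((r * d - 2 * δ - 3 * γ).toNat : ℤ) = r * d - 2 * δ - 3 * γ :=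
    Int.toNat_of_nonneg (by linarith)
  constructor
  · zify
    rw [hα', hβ', Int.toNat_of_nonneg hδ, Int.toNat_of_nonneg hγ]
    ring
  · rw [← Int.natCast_dvd_natCast]
    push_cast
    rw [hβ', Int.toNat_of_nonneg hδ, Int.toNat_of_nonneg hγ]
    exact ⟨r, by ring⟩

theorem injOn_exponentsOfWset {d : ℕ} (hd : 0 < d) : Set.InjOn (exponentsOfWset d) (Wset d) := by
  rintro ⟨r, γ, δ⟩ hx ⟨r', γ', δ'⟩ hx' h
  obtain ⟨-, -, hγ, hδ, hα, -⟩ := mem_Wset.1 hx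
  obtain ⟨-, -, hγ', hδ', hα', -⟩ := mem_Wset.1 hx'
  simp only [exponentsOfWset, Prod.mk.injEq] at h
  obtain ⟨hxexp, -, hzexp, htexp⟩ := h
  obtain rfl : δ = δ' := by omega
  obtain rfl : γ = γ' := by omega
  have hr : (1 - r) * (d : ℤ) = (1 - r') * d := by omega
  obtain rfl : r = r' := by have := mul_right_cancel₀ (by positivity) hr; omega
  rfl

theorem ncard_Wset_le {d : ℕ} (hd : 0 < d) : (Wset d).ncard ≤ (invariantExponents d).ncard := by
  refine Set.ncard_le_ncard_of_injOn _ (mapsTo_exponentsOfWset d) (injOn_exponentsOfWset hd) ?_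
  refine (Set.finite_Iic (d, d, d, d)).subset ?_
  rintro ⟨α, β, c, e⟩ hq
  obtain ⟨hsum, -⟩ := mem_invariantExponents.1 hq
  simp only [Set.mem_Iic, Prod.mk_le_mk]
  omega

theorem stmt2 (d : ℕ) (hd : 4 ≤ d) :
    Set.ncard {q : ℕ × ℕ × ℕ × ℕ |
        q.1 + q.2.1 + q.2.2.1 + q.2.2.2 = d ∧ d ∣ q.2.1 + 2 * q.2.2.1 + 3 * q.2.2.2} <
      (d + 1) * (d + 2) / 2 ∧
    Set.ncard (Wset d) < Nat.choose (d + 2) 2 := by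
  have hS : (invariantExponents d).ncard < (d + 2).choose 2 :=
    ncard_invariantExponents_lt (by omega)
  have hchoose : (d + 2).choose 2 = (d + 1) * (d + 2) / 2 := by
    rw [Nat.choose_two_right, mul_comm]
    rfl
  exact ⟨hchoose ▸ hS, (ncard_Wset_le (by omega)).trans_lt hS⟩
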